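/- The fundamental group of a closed orientable surface of genus g ≥ 1 is not a free group. -/

import Mathlib

open scoped commutatorElement

/-- The standard orientable surface relator `Π_{i<g} [a_i, b_i]` in the free group on
`2g` generators. -/
def surfaceRelator (g : ℕ) : FreeGroup (Fin (2 * g)) :=
  ((List.finRange g).map (fun i =>
    ⁅FreeGroup.of (⟨2 * i.1, by omega⟩ : Fin (2 * g)),
     FreeGroup.of (⟨2 * i.1 + 1, by omega⟩ : Fin (2 * g))⁆)).prod

/-- The fundamental group of the closed orientable surface of genus `g`, given by the
presentation `⟨a₁,b₁,…,a_g,b_g | Π [aᵢ,bᵢ]⟩`. -/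
def surfaceGroup (g : ℕ) :=
  PresentedGroup ({surfaceRelator g} : Set (FreeGroup (Fin (2 * g))))

instance (g : ℕ) : Group (surfaceGroup g) := by
  unfold surfaceGroup; infer_instance

/-- Homomorphisms out of a presented group correspond to maps on generators
killing the relators. -/
noncomputable def presentedHomEquiv {α : Type*} {rels : Set (FreeGroup α)} {G : Type*}
    [Group G] :
    (PresentedGroup rels →* G) ≃ {f : α → G // ∀ r ∈ rels, FreeGroup.lift f r = 1} where
  toFun φ := ⟨fun x => φ (PresentedGroup.of x), fun r hr => by
    have h1 : (FreeGroup.lift (fun x => φ (PresentedGroup.of x)) : FreeGroup α →* G)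
        = φ.comp (PresentedGroup.mk rels) := by
      ext x
      simp [PresentedGroup.of]
    have h2 : PresentedGroup.mk rels r = 1 :=
      (QuotientGroup.eq_one_iff r).mpr (Subgroup.subset_normalClosure hr)
    rw [h1]
    simp [h2]⟩
  invFun f := PresentedGroup.toGroup f.2
  left_inv φ := by
    ext x
    exact PresentedGroup.toGroup.of _
  right_inv f := by
    ext x
    exact PresentedGroup.toGroup.of _

/-- Precomposition with a group isomorphism gives an equivalence of hom-sets. -/
def mulEquivHomCongr {A B C : Type*} [Group A] [Group B] [Group C] (e : A ≃* B) :
    (A →* C) ≃ (B →* C) where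
  toFun f := f.comp e.symm.toMonoidHom
  invFun f := f.comp e.toMonoidHom
  left_inv f := by ext x; simp
  right_inv f := by ext x; simp

lemma lift_surfaceRelator {G : Type*} [Group G] {g : ℕ} (v : Fin (2 * g) → G) :
    FreeGroup.lift v (surfaceRelator g) =
      ((List.finRange g).map (fun i =>
        ⁅v ⟨2 * i.1, by omega⟩, v ⟨2 * i.1 + 1, by omega⟩⁆)).prod := by
  unfold surfaceRelator
  rw [map_list_prod, List.map_map]
  congr 1
  apply List.map_congr_left
  intro i _
  simp [Function.comp, map_commutatorElement]

/-- Into an abelian group, the surface relator always dies. -/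
lemma lift_surfaceRelator_abelian {G : Type*} [CommGroup G] {g : ℕ} (v : Fin (2 * g) → G) :
    FreeGroup.lift v (surfaceRelator g) = 1 := by
  rw [lift_surfaceRelator]
  apply List.prod_eq_one
  intro x hx
  simp only [List.mem_map] at hx
  obtain ⟨i, -, rfl⟩ := hx
  exact commutatorElement_eq_one_iff_commute.mpr (Commute.all _ _)

/-- A tuple of elements of the dihedral group of order 8 on which the surface relator
does not vanish. -/
lemma exists_bad_tuple (g : ℕ) (hg : 1 ≤ g) :
    ∃ v : Fin (2 * g) → DihedralGroup 4,
      FreeGroup.lift v (surfaceRelator g) ≠ 1 := by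
  obtain ⟨g', rfl⟩ : ∃ g', g = g' + 1 := ⟨g - 1, by omega⟩
  set w : Fin (2 * (g' + 1)) → DihedralGroup 4 := fun k =>
    if k.1 = 0 then DihedralGroup.r 1 else if k.1 = 1 then DihedralGroup.sr 0 else 1 with hw
  refine ⟨w, ?_⟩
  rw [lift_surfaceRelator, List.finRange_succ, List.map_cons, List.prod_cons,
    List.map_map]
  have htail : ∀ x ∈ (List.finRange g').map
      ((fun i : Fin (g' + 1) =>
        ⁅w ⟨2 * i.1, by omega⟩, w ⟨2 * i.1 + 1, by omega⟩⁆) ∘ Fin.succ), x = 1 := by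
    intro x hx
    simp only [List.mem_map, Function.comp] at hx
    obtain ⟨i, -, rfl⟩ := hx
    have h1 : w ⟨2 * (Fin.succ i).1, by omega⟩ = 1 := by
      simp only [hw, Fin.val_succ]
      norm_num
    have h2 : w ⟨2 * (Fin.succ i).1 + 1, by omega⟩ = 1 := by
      simp only [hw, Fin.val_succ]
      norm_num
    rw [h1, h2]
    simp
  rw [List.prod_eq_one htail, mul_one]
  have h1 : w ⟨2 * (0 : Fin (g' + 1)).1, by omega⟩ = DihedralGroup.r 1 := by
    simp [hw]
  have h2 : w ⟨2 * (0 : Fin (g' + 1)).1 + 1, by omega⟩ = DihedralGroup.sr 0 := by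
    simp [hw]
    intro h; exact absurd (Nat.mod_eq_of_lt (by omega)) h
  rw [h1, h2]
  decide

/-- the fundamental group of a closed orientable surface of genus
`g ≥ 1` is not a free group. -/
theorem surfaceGroup_not_free (g : ℕ) (hg : 1 ≤ g) :
    ¬ IsFreeGroup (surfaceGroup g) := by
  intro hFree
  classical
  set M := Multiplicative (ZMod 2) with hM
  set D := DihedralGroup 4 with hD
  obtain ⟨w, hwbad⟩ := exists_bad_tuple g hg
  -- hom-counts through the presentation
  have surfEquiv : ∀ (G : Type) [Group G],
      (surfaceGroup g →* G) ≃
        {v : Fin (2 * g) → G // FreeGroup.lift v (surfaceRelator g) = 1} := by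
    intro G _
    refine (presentedHomEquiv (rels := ({surfaceRelator g} : Set (FreeGroup (Fin (2 * g)))))).trans ?_
    apply Equiv.subtypeEquivRight
    intro v
    simp
  -- hom-counts through freeness
  set S := IsFreeGroup.Generators (surfaceGroup g)
  have freeEquiv : ∀ (G : Type) [Group G], (surfaceGroup g →* G) ≃ (S → G) := by
    intro G _
    exact (mulEquivHomCongr (IsFreeGroup.toFreeGroup (surfaceGroup g))).trans
      FreeGroup.lift.symm
  -- counting maps to `M = ℤ/2`
  have hMcard : Nat.card (S → M) = 2 ^ (2 * g) := by
    have e1 : (S → M) ≃ (Fin (2 * g) → M) :=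
      (freeEquiv M).symm.trans ((surfEquiv M).trans
        (Equiv.subtypeUnivEquiv fun v => lift_surfaceRelator_abelian v))
    rw [Nat.card_congr e1, Nat.card_fun]
    simp [hM]
  -- counting maps to `D`
  have hDcard : Nat.card (S → D) = 8 ^ (2 * g) := by
    have e8 : D ≃ M × M × M := by
      apply Fintype.equivOfCardEq
      simp [hD, hM, DihedralGroup.card]
    have e1 : (S → D) ≃ (S → M) × (S → M) × (S → M) :=
      (Equiv.arrowCongr (Equiv.refl S) e8).trans
        ((Equiv.arrowProdEquivProdArrow S (fun _ => M) (fun _ => M × M)).trans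
          (Equiv.prodCongr (Equiv.refl _) (Equiv.arrowProdEquivProdArrow S (fun _ => M) (fun _ => M))))
    rw [Nat.card_congr e1, Nat.card_prod, Nat.card_prod, hMcard]
    rw [← pow_add, ← pow_add, (by norm_num : (8:ℕ) = 2 ^ 3), ← pow_mul]
    congr 1
    ring
  -- but the hom-count to `D` is strictly less than `8 ^ (2g)`
  have hlt : Nat.card (S → D) < 8 ^ (2 * g) := by
    have e1 : (S → D) ≃
        {v : Fin (2 * g) → D // FreeGroup.lift v (surfaceRelator g) = 1} :=
      (freeEquiv D).symm.trans (surfEquiv D)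
    rw [Nat.card_congr e1]
    have hlt2 : Nat.card {v : Fin (2 * g) → D // FreeGroup.lift v (surfaceRelator g) = 1}
        < Nat.card (Fin (2 * g) → D) := Finite.card_subtype_lt (x := w) hwbad
    have : Nat.card (Fin (2 * g) → D) = 8 ^ (2 * g) := by
      rw [Nat.card_fun]
      simp [hD, Nat.card_eq_fintype_card, DihedralGroup.card]
    omega
  omega
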